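/- arXiv:1604.08760 — 9 statements merged into one kernel-verified Lean document; each statement's English description precedes it below -/
import Mathlib

section
/- If a word w with |w| ≥ 2 occurs in x and std(w) < 0, then f(w_p) > f(w); in particular f(w_p) ≥ 2, so the longest proper prefix of w occurs at least twice in x. -/
/-- The observed frequency `f(w)`: the number of starting positions at which
the word `w` occurs in the word `x` (occurrences may overlap). -/
def occ {α : Type*} [DecidableEq α] (x w : List α) : ℕ :=
  ((Finset.range (x.length + 1)).filter (fun i => (x.drop i).take w.length = w)).card

/-- The expected frequency `E(w)` of `w` in `x`:
`E(w) = f(w_p)·f(w_s)/f(w_i)` if `f(w_i) > 0`, and `E(w) = 0` otherwise,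
where `w_p = w.dropLast` is the longest proper prefix of `w`,
`w_s = w.tail` is the longest proper suffix of `w`, and
`w_i = w.tail.dropLast` is the infix of `w` obtained by deleting its
first and last letters. -/
noncomputable def expFreq {α : Type*} [DecidableEq α] (x w : List α) : ℝ :=
  if 0 < occ x w.tail.dropLast then
    ((occ x w.dropLast : ℝ) * (occ x w.tail : ℝ)) / (occ x w.tail.dropLast : ℝ)
  else 0

/-- The standard deviation `std(w) = (f(w) − E(w)) / max(√E(w), 1)`. -/
noncomputable def stdDev {α : Type*} [DecidableEq α] (x w : List α) : ℝ :=
  ((occ x w : ℝ) - expFreq x w) / max (Real.sqrt (expFreq x w)) 1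

/-- `w` is a minimal absent word of `x`: `w` is absent from `x`
(`f(w) = 0`) and every proper factor of `w` occurs in `x`. -/
def IsMAW {α : Type*} [DecidableEq α] (x w : List α) : Prop :=
  occ x w = 0 ∧ ∀ v : List α, v <:+: w → v ≠ w → 0 < occ x v


lemma occ_le_of_prefix {α : Type*} [DecidableEq α] (x : List α) {u v : List α}
    (h : u <+: v) : occ x v ≤ occ x u := by
  apply Finset.card_le_card
  intro i hi
  simp only [Finset.mem_filter, Finset.mem_range] at hi ⊢
  refine ⟨hi.1, ?_⟩
  obtain ⟨t, ht⟩ := h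
  have hlen : u.length ≤ v.length := by
    rw [← ht]; simp
  calc (x.drop i).take u.length = ((x.drop i).take v.length).take u.length := by
        rw [List.take_take, min_eq_left hlen]
    _ = v.take u.length := by rw [hi.2]
    _ = u := by rw [← ht, List.take_left']; simp

/-- If a word `w` with `|w| ≥ 2` occurs in `x` and `std(w) < 0`, then
`f(w_p) > f(w)`; in particular `f(w_p) ≥ 2`. -/
theorem stmt_2 {α : Type*} [DecidableEq α] (x w : List α) (hw : 2 ≤ w.length)
    (hocc : 0 < occ x w) (hstd : stdDev x w < 0) :
    occ x w < occ x w.dropLast ∧ 2 ≤ occ x w.dropLast := by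
  have hd : (0:ℝ) < max (Real.sqrt (expFreq x w)) 1 :=
    lt_of_lt_of_le one_pos (le_max_right _ _)
  have hE : (occ x w : ℝ) < expFreq x w := by
    have := (div_neg_iff).mp hstd
    rcases this with ⟨_, h2⟩ | ⟨h1, _⟩
    · linarith
    · linarith
  have hocc1 : (1:ℝ) ≤ (occ x w : ℝ) := by exact_mod_cast hocc
  have hi : 0 < occ x w.tail.dropLast := by
    by_contra hni
    rw [expFreq, if_neg hni] at hE
    linarith
  rw [expFreq, if_pos hi] at hE
  have hsi : occ x w.tail ≤ occ x w.tail.dropLast :=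
    occ_le_of_prefix x (List.dropLast_prefix _)
  have hip : (0:ℝ) < (occ x w.tail.dropLast : ℝ) := by exact_mod_cast hi
  have hEp : ((occ x w.dropLast : ℝ) * (occ x w.tail : ℝ)) / (occ x w.tail.dropLast : ℝ)
      ≤ (occ x w.dropLast : ℝ) := by
    rw [div_le_iff₀ hip]
    have : (occ x w.tail : ℝ) ≤ (occ x w.tail.dropLast : ℝ) := by exact_mod_cast hsi
    nlinarith [Nat.cast_nonneg (α := ℝ) (occ x w.dropLast)]
  have hlt : (occ x w : ℝ) < (occ x w.dropLast : ℝ) := lt_of_lt_of_le hE hEp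
  have h1 : occ x w < occ x w.dropLast := by exact_mod_cast hlt
  exact ⟨h1, by omega⟩
end

section
/- Let ρ < 0 be a real number. Any absent ρ-avoided word w in x with |w| > 2 is a minimal absent word of x. -/
lemma occ_pos_iff {α : Type*} [DecidableEq α] (x v : List α) :
    0 < occ x v ↔ v <:+: x := by
  unfold occ
  rw [Finset.card_pos]
  constructor
  · rintro ⟨i, hi⟩
    simp only [Finset.mem_filter, Finset.mem_range] at hi
    rw [← hi.2]
    exact ((List.take_prefix _ _).isInfix).trans (List.drop_suffix i x).isInfix
  · rintro ⟨s, t, rfl⟩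
    refine ⟨s.length, ?_⟩
    simp only [Finset.mem_filter, Finset.mem_range, List.length_append]
    refine ⟨by omega, ?_⟩
    rw [List.append_assoc, List.drop_left, List.take_left]

/-- Let `ρ < 0`. Any absent `ρ`-avoided word `w` in `x` with `|w| > 2`
is a minimal absent word of `x`. -/
theorem stmt_5 {α : Type*} [DecidableEq α] (ρ : ℝ) (hρ : ρ < 0)
    (x w : List α) (hw : 2 < w.length)
    (habs : occ x w = 0) (hav : stdDev x w ≤ ρ) :
    IsMAW x w := by
  have hE : 0 < expFreq x w := by
    by_contra hE
    push_neg at hE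
    unfold stdDev at hav
    have hD : (0:ℝ) < max (Real.sqrt (expFreq x w)) 1 := lt_of_lt_of_le one_pos (le_max_right _ _)
    rw [habs] at hav
    have : (0:ℝ) ≤ ((0:ℕ) - expFreq x w) / max (Real.sqrt (expFreq x w)) 1 := by
      apply div_nonneg _ hD.le
      simp
      linarith
    linarith
  have hi : 0 < occ x w.tail.dropLast := by
    by_contra h
    push_neg at h
    unfold expFreq at hE
    rw [if_neg (by omega)] at hE
    linarith
  have hnum : (0:ℝ) < (occ x w.dropLast : ℝ) * (occ x w.tail : ℝ) := by
    unfold expFreq at hE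
    rw [if_pos hi] at hE
    by_contra h
    push_neg at h
    have : ((occ x w.dropLast : ℝ) * (occ x w.tail : ℝ)) / (occ x w.tail.dropLast : ℝ) ≤ 0 :=
      div_nonpos_of_nonpos_of_nonneg h (by positivity)
    linarith
  have hp : 0 < occ x w.dropLast := by
    by_contra h
    push_neg at h
    interval_cases h' : occ x w.dropLast
    simp [h'] at hnum
  have hs : 0 < occ x w.tail := by
    by_contra h
    push_neg at h
    interval_cases h' : occ x w.tail
    simp [h'] at hnum
  refine ⟨habs, fun v hv hne => ?_⟩
  rw [occ_pos_iff]
  obtain ⟨a, b, hab⟩ := hv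
  rcases List.eq_nil_or_concat b with rfl | ⟨b', c, rfl⟩
  · -- v is a suffix; since v ≠ w, a ≠ []
    have ha : a ≠ [] := by
      rintro rfl
      simp at hab
      exact hne hab
    have : v <:+: w.tail := by
      rw [← hab, List.append_nil, List.tail_append_of_ne_nil ha]
      exact ⟨a.tail, [], by simp⟩
    exact this.trans ((occ_pos_iff x _).mp hs)
  · have : v <:+: w.dropLast := by
      rw [← hab]
      refine ⟨a, b', ?_⟩
      rw [List.concat_eq_append, ← List.append_assoc, List.dropLast_concat]
    exact this.trans ((occ_pos_iff x _).mp hp)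
end

section
/- Let ρ < 0 be a real number and let k > 2 be an integer. The total number of ρ-avoided words of length k in a word x of length n over an alphabet of size σ is at most (σ + 1)·n − k + 1. -/
lemma occ_pos_exists {α : Type*} [DecidableEq α] (x w : List α) (h : 0 < occ x w) :
    ∃ i, i + w.length ≤ x.length ∧ (x.drop i).take w.length = w := by
  rw [occ, Finset.card_pos] at h
  obtain ⟨i, hi⟩ := h
  simp only [Finset.mem_filter, Finset.mem_range] at hi
  obtain ⟨hi1, hi2⟩ := hi
  refine ⟨i, ?_, hi2⟩
  have := congrArg List.length hi2
  simp only [List.length_take, List.length_drop] at this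
  omega

lemma occ_dropLast_pos {α : Type*} [DecidableEq α] (x w : List α) (ρ : ℝ) (hρ : ρ < 0)
    (h : stdDev x w ≤ ρ) : 0 < occ x w.dropLast := by
  have hden : (0:ℝ) < max (Real.sqrt (expFreq x w)) 1 :=
    lt_of_lt_of_le one_pos (le_max_right _ _)
  have hneg : ((occ x w : ℝ) - expFreq x w) / max (Real.sqrt (expFreq x w)) 1 < 0 :=
    lt_of_le_of_lt h hρ
  have h1 : (occ x w : ℝ) - expFreq x w < 0 := by
    by_contra hc
    push_neg at hc
    exact absurd hneg (not_lt.mpr (div_nonneg hc hden.le))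
  have hE : 0 < expFreq x w := by
    have : (0:ℝ) ≤ (occ x w : ℝ) := Nat.cast_nonneg _
    linarith
  rw [expFreq] at hE
  split_ifs at hE with hc
  · by_contra h0
    push_neg at h0
    have h00 : occ x w.dropLast = 0 := Nat.le_zero.mp h0
    rw [h00] at hE
    simp at hE
  · exact absurd hE (lt_irrefl 0)

/-- Let `ρ < 0` and `k > 2`. The total number of `ρ`-avoided words of length
`k` in a word `x` of length `n` over an alphabet of size `σ` is at most
`(σ + 1)·n − k + 1`. -/
theorem stmt_6 {α : Type*} [DecidableEq α] [Fintype α] (σ n k : ℕ)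
    (hσ : Fintype.card α = σ) (ρ : ℝ) (hρ : ρ < 0) (hk : 2 < k)
    (x : List α) (hn : x.length = n) :
    {w : List α | w.length = k ∧ stdDev x w ≤ ρ}.Finite ∧
    {w : List α | w.length = k ∧ stdDev x w ≤ ρ}.ncard ≤ (σ + 1) * n - k + 1 := by
  set S := {w : List α | w.length = k ∧ stdDev x w ≤ ρ} with hS
  -- the target finset
  set T : Finset (List α) :=
    (Finset.range n ×ˢ (Finset.univ : Finset α)).image
      (fun p => (x.drop p.1).take (k-1) ++ [p.2]) with hT
  have hsub : S ⊆ ↑T := by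
    intro w hw
    obtain ⟨hwlen, hwstd⟩ := hw
    have hpos := occ_dropLast_pos x w ρ hρ hwstd
    obtain ⟨i, hilen, hieq⟩ := occ_pos_exists x w.dropLast hpos
    have hdl : w.dropLast.length = k - 1 := by
      rw [List.length_dropLast, hwlen]
    have hne : w ≠ [] := by
      intro h; rw [h] at hwlen; simp at hwlen; omega
    have hin : i < n := by
      rw [hdl, hn] at hilen; omega
    rw [Finset.mem_coe, hT, Finset.mem_image]
    refine ⟨(i, w.getLast hne), by simp [Finset.mem_product, hin], ?_⟩
    have : (x.drop i).take (k-1) = w.dropLast := by rw [← hdl]; exact hieq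
    simp only [this]
    exact List.dropLast_append_getLast hne
  constructor
  · exact Set.Finite.subset T.finite_toSet hsub
  · rcases Set.eq_empty_or_nonempty S with hemp | ⟨w, hw⟩
    · rw [hemp]; simp
    · -- from w ∈ S we get k - 1 ≤ n and σ ≥ 1
      obtain ⟨hwlen, hwstd⟩ := hw
      have hpos := occ_dropLast_pos x w ρ hρ hwstd
      obtain ⟨i, hilen, _⟩ := occ_pos_exists x w.dropLast hpos
      have hdl : w.dropLast.length = k - 1 := by
        rw [List.length_dropLast, hwlen]
      have hkn : k - 1 ≤ n := by rw [hdl, hn] at hilen; omega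
      have hσ1 : 1 ≤ σ := by
        rw [← hσ]
        have : Nonempty α := by
          rcases w with _ | ⟨a, _⟩
          · simp at hwlen; omega
          · exact ⟨a⟩
        exact Fintype.card_pos
      have hcard : S.ncard ≤ T.card := by
        have := Set.ncard_le_ncard hsub T.finite_toSet
        rwa [Set.ncard_coe_finset] at this
      have hTcard : T.card ≤ n * σ := by
        calc T.card ≤ (Finset.range n ×ˢ (Finset.univ : Finset α)).card :=
              Finset.card_image_le
          _ = n * σ := by rw [Finset.card_product, Finset.card_range, Finset.card_univ, hσ]
      have hmul : σ * n + n = (σ + 1) * n := by ring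
      have : n * σ ≤ (σ + 1) * n - k + 1 := by
        have h2 : n * σ = σ * n := Nat.mul_comm n σ
        omega
      omega
end

section
/- If a word w with |w| > 2 is absent from x and both its longest proper prefix w_p and its longest proper suffix w_s occur in x (in particular, if w is a minimal absent word of x with |w| > 2), then f(w_i) ≥ 2, i.e., the infix w_i occurs at least twice in x. -/
/-- If a word `w` with `|w| > 2` is absent from `x` and both its longest proper
prefix `w_p` and its longest proper suffix `w_s` occur in `x`, then
`f(w_i) ≥ 2`, i.e., the infix `w_i` occurs at least twice in `x`. -/
theorem stmt_7 {α : Type*} [DecidableEq α] (x w : List α) (hw : 2 < w.length)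
    (habs : occ x w = 0) (hp : 0 < occ x w.dropLast) (hs : 0 < occ x w.tail) :
    2 ≤ occ x w.tail.dropLast := by
  classical
  set n := w.length with hn
  obtain ⟨i, hi⟩ := Finset.card_pos.mp hp
  simp only [Finset.mem_filter, Finset.mem_range] at hi
  obtain ⟨hiR, hiE⟩ := hi
  obtain ⟨j, hj⟩ := Finset.card_pos.mp hs
  simp only [Finset.mem_filter, Finset.mem_range] at hj
  obtain ⟨hjR, hjE⟩ := hj
  have hlp : w.dropLast.length = n - 1 := by simp [hn]
  have hls : w.tail.length = n - 1 := by simp [hn]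
  have hli : w.tail.dropLast.length = n - 2 := by simp [hn]; omega
  -- length bound for i
  have hxi : n - 1 ≤ x.length - i := by
    have h := congrArg List.length hiE
    rw [List.length_take, List.length_drop, hlp] at h
    omega
  -- occurrence of infix at i+1
  have h1 : (x.drop (i+1)).take w.tail.dropLast.length = w.tail.dropLast := by
    rw [hli, ← List.tail_dropLast]
    have : (x.drop i).drop 1 = x.drop (i + 1) := by rw [List.drop_drop]
    calc (x.drop (i+1)).take (n - 2)
        = ((x.drop i).drop 1).take (w.dropLast.length - 1) := by rw [this, hlp]; congr 1
      _ = ((x.drop i).take w.dropLast.length).drop 1 := (List.drop_take ..).symm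
      _ = w.dropLast.tail := by rw [hiE, List.drop_one]
  -- occurrence of infix at j
  have h2 : (x.drop j).take w.tail.dropLast.length = w.tail.dropLast := by
    rw [hli]
    have hdt : w.tail.dropLast = w.tail.take (n - 2) := by
      rw [List.dropLast_eq_take, hls]; congr 1
    rw [hdt]
    conv_rhs => rw [← hjE]
    rw [List.take_take, hls]
    congr 1
    omega
  -- distinctness
  have hne : i + 1 ≠ j := by
    intro hij
    have hocc : (x.drop i).take n = w := by
      have hsplit : (x.drop i).take n = (x.drop i).take 1 ++ ((x.drop i).drop 1).take (n-1) := by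
        rw [← List.take_add]; congr 1; omega
      have hd1 : (x.drop i).drop 1 = x.drop j := by rw [List.drop_drop, ← hij]
      have ht1 : (x.drop i).take 1 = w.take 1 := by
        have : ((x.drop i).take w.dropLast.length).take 1 = (x.drop i).take 1 := by
          rw [List.take_take]; congr 1; rw [hlp]; omega
        rw [hiE] at this
        rw [← this, List.dropLast_eq_take, List.take_take]
        congr 1; omega
      rw [hsplit, hd1, ht1, ← hls, hjE]
      conv_rhs => rw [← List.take_append_drop 1 w]
      congr 1
      rw [List.drop_one]
    have : i ∈ (Finset.range (x.length + 1)).filter (fun i => (x.drop i).take w.length = w) := by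
      simp only [Finset.mem_filter, Finset.mem_range]
      exact ⟨hiR, hocc⟩
    have := Finset.card_pos.mpr ⟨i, this⟩
    unfold occ at habs
    omega
  -- conclude
  have hmem1 : i + 1 ∈ (Finset.range (x.length + 1)).filter
      (fun k => (x.drop k).take w.tail.dropLast.length = w.tail.dropLast) := by
    simp only [Finset.mem_filter, Finset.mem_range]
    refine ⟨?_, h1⟩
    omega
  have hmem2 : j ∈ (Finset.range (x.length + 1)).filter
      (fun k => (x.drop k).take w.tail.dropLast.length = w.tail.dropLast) := by
    simp only [Finset.mem_filter, Finset.mem_range]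
    exact ⟨hjR, h2⟩
  exact Finset.one_lt_card.mpr ⟨i+1, hmem1, j, hmem2, hne⟩
end

section
/- Let ρ < 0 be a real number. If a word w with |w| > 2 is ρ-avoided in x, then f(w_i) ≥ 2, i.e., the infix w_i is a repeated factor of x. -/
/-!
Since `std(w) < 0` means `f(w) < E(w)`, it suffices to show `E(w) ≤ f(w)` whenever
`f(w_i) ≤ 1`. If `f(w_i) = 0` then `E(w) = 0`. Otherwise every occurrence of `w_s`, and every
occurrence of `w_p` shifted by one, is an occurrence of `w_i`; so `f(w_p), f(w_s) ≤ 1`, and if both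
occur, their occurrences overlap in the unique occurrence of `w_i` and glue into one of `w`.
Hence `E(w) = f(w_p) f(w_s) ≤ f(w)`.
-/

namespace List

theorem IsPrefix.tail_tail {α : Type*} {l₁ l₂ : List α} (h : l₁ <+: l₂) :
    l₁.tail <+: l₂.tail := by
  cases l₁ with
  | nil => exact nil_prefix
  | cons a l =>
    obtain ⟨t, rfl⟩ := h
    exact ⟨t, rfl⟩

end List

section Occurrences

variable {α : Type*} [DecidableEq α]

def occurrences (x w : List α) : Finset ℕ :=
  (Finset.range (x.length + 1)).filter (fun i => w <+: x.drop i)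

theorem occ_eq_card_occurrences (x w : List α) : occ x w = (occurrences x w).card := by
  unfold occ occurrences
  congr 1
  refine Finset.filter_congr fun i _ => ?_
  rw [List.prefix_iff_eq_take, eq_comm]

theorem mem_occurrences {x w : List α} {i : ℕ} :
    i ∈ occurrences x w ↔ i ≤ x.length ∧ w <+: x.drop i := by
  simp [occurrences]

theorem lt_length_of_mem_occurrences {x w : List α} {i : ℕ} (hw : w ≠ [])
    (hi : i ∈ occurrences x w) : i < x.length := by
  have hne := (mem_occurrences.1 hi).2.ne_nil hw
  simpa using hne

theorem succ_mem_occurrences_infix {x w : List α} (hw : 2 < w.length) {j : ℕ}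
    (hj : j ∈ occurrences x w.dropLast) : j + 1 ∈ occurrences x w.tail.dropLast := by
  have hne : w.dropLast ≠ [] := by
    rw [← List.length_pos_iff, List.length_dropLast]; omega
  refine mem_occurrences.2 ⟨lt_length_of_mem_occurrences hne hj, ?_⟩
  rw [← List.tail_dropLast, ← List.tail_drop]
  exact (mem_occurrences.1 hj).2.tail_tail

theorem mem_occurrences_infix_of_mem_occurrences_tail {x w : List α} {k : ℕ}
    (hk : k ∈ occurrences x w.tail) : k ∈ occurrences x w.tail.dropLast := by
  obtain ⟨hk, hpre⟩ := mem_occurrences.1 hk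
  exact mem_occurrences.2 ⟨hk, (List.dropLast_prefix _).trans hpre⟩

theorem occ_dropLast_le_occ_infix (x w : List α) (hw : 2 < w.length) :
    occ x w.dropLast ≤ occ x w.tail.dropLast := by
  simp only [occ_eq_card_occurrences]
  exact Finset.card_le_card_of_injOn (· + 1) (fun _ hj => succ_mem_occurrences_infix hw hj)
    (fun _ _ _ _ h => Nat.succ_injective h)

theorem occ_tail_le_occ_infix (x w : List α) :
    occ x w.tail ≤ occ x w.tail.dropLast := by
  simp only [occ_eq_card_occurrences]
  exact Finset.card_le_card fun _ hk => mem_occurrences_infix_of_mem_occurrences_tail hk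

theorem occ_pos_of_occ_infix_eq_one {x w : List α} (hw : 2 < w.length)
    (hi : occ x w.tail.dropLast = 1) (hp : 0 < occ x w.dropLast) (hs : 0 < occ x w.tail) :
    0 < occ x w := by
  rw [occ_eq_card_occurrences, Finset.card_pos] at hp hs ⊢
  obtain ⟨j, hj⟩ := hp
  obtain ⟨k, hk⟩ := hs
  have hjk : j + 1 = k := by
    rw [occ_eq_card_occurrences] at hi
    exact Finset.card_le_one.1 hi.le _ (succ_mem_occurrences_infix hw hj) _
      (mem_occurrences_infix_of_mem_occurrences_tail hk)
  subst hjk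
  have hjx : j < x.length := lt_length_of_mem_occurrences
    (by rw [← List.length_pos_iff, List.length_dropLast]; omega) hj
  have hpre := (mem_occurrences.1 hj).2
  have hsuf := (mem_occurrences.1 hk).2
  refine ⟨j, mem_occurrences.2 ⟨hjx.le, ?_⟩⟩
  obtain ⟨a, v, rfl⟩ := List.exists_cons_of_length_pos (by omega : 0 < w.length)
  have hv : v ≠ [] := by rw [← List.length_pos_iff]; simp at hw; omega
  rw [List.drop_eq_getElem_cons hjx, List.dropLast_cons_of_ne_nil hv] at hpre
  rw [List.drop_eq_getElem_cons hjx]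
  exact List.cons_prefix_cons.2 ⟨(List.cons_prefix_cons.1 hpre).1, hsuf⟩

theorem occ_dropLast_mul_occ_tail_le_occ {x w : List α} (hw : 2 < w.length)
    (hi : occ x w.tail.dropLast = 1) : occ x w.dropLast * occ x w.tail ≤ occ x w := by
  have hp := occ_dropLast_le_occ_infix x w hw
  have hs := occ_tail_le_occ_infix x w
  rcases Nat.eq_zero_or_pos (occ x w.dropLast) with hp0 | hp0
  · simp [hp0]
  rcases Nat.eq_zero_or_pos (occ x w.tail) with hs0 | hs0
  · simp [hs0]
  have := occ_pos_of_occ_infix_eq_one hw hi hp0 hs0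
  rw [show occ x w.dropLast = 1 by omega, show occ x w.tail = 1 by omega]
  omega

theorem expFreq_le_occ_of_occ_infix_le_one {x w : List α} (hw : 2 < w.length)
    (hi : occ x w.tail.dropLast ≤ 1) : expFreq x w ≤ occ x w := by
  unfold expFreq
  split_ifs with hpos
  · rw [show occ x w.tail.dropLast = 1 by omega, Nat.cast_one, div_one]
    exact_mod_cast occ_dropLast_mul_occ_tail_le_occ hw (by omega)
  · positivity

theorem stdDev_nonneg_of_expFreq_le_occ {x w : List α} (h : expFreq x w ≤ occ x w) :
    0 ≤ stdDev x w :=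
  div_nonneg (sub_nonneg.2 h) (le_max_of_le_right zero_le_one)

end Occurrences

/-- Let `ρ < 0`. If a word `w` with `|w| > 2` is `ρ`-avoided in `x`,
then `f(w_i) ≥ 2`, i.e., the infix `w_i` is a repeated factor of `x`. -/
theorem stmt_8 {α : Type*} [DecidableEq α] (ρ : ℝ) (hρ : ρ < 0)
    (x w : List α) (hw : 2 < w.length) (hav : stdDev x w ≤ ρ) :
    2 ≤ occ x w.tail.dropLast := by
  by_contra! hrep
  have hstd : 0 ≤ stdDev x w :=
    stdDev_nonneg_of_expFreq_le_occ (expFreq_le_occ_of_occ_infix_le_one hw (by omega))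
  linarith
end

section
/- Let ρ < 0 be a real number and suppose x has at least one factor occurring at least twice; let L denote the maximum length of a factor of x with f(v) ≥ 2. Then every ρ-avoided word w in x with |w| > 2 satisfies |w| ≤ L + 2. -/
/-!
If `std(w) ≤ ρ < 0` then `f(w) < E(w)`, so in particular `f(w_i) > 0`. When `w_i` occurs at least
twice, `|w_i| ≤ L` and we are done. When `w_i` occurs exactly once, `E(w) = f(w_p)·f(w_s)` with both
factors at most one, so `f(w) < E(w)` forces `f(w_p) = f(w_s) = 1` and `f(w) = 0`; but the unique
occurrence of `w_i` is shared by the occurrences of `w_p = a w_i` and of `w_s`, which therefore glue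
together into an occurrence of `w`.
-/

namespace Occ

variable {α : Type*}

theorem cons_prefix_drop {x u : List α} {a : α} {k : ℕ} (h : a :: u <+: x.drop k) :
    k < x.length ∧ u <+: x.drop (k + 1) := by
  obtain ⟨r, hr⟩ := h
  refine ⟨?_, r, ?_⟩
  · by_contra hk
    simp [List.drop_eq_nil_of_le (not_lt.1 hk)] at hr
  · rw [← List.tail_drop, ← hr, List.cons_append, List.tail_cons]

variable [DecidableEq α]

def positions (x w : List α) : Finset ℕ :=
  (Finset.range (x.length + 1)).filter (fun i => (x.drop i).take w.length = w)

theorem occ_eq_card_positions (x w : List α) : occ x w = (positions x w).card := rfl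

theorem mem_positions {x w : List α} {i : ℕ} :
    i ∈ positions x w ↔ i ≤ x.length ∧ w <+: x.drop i := by
  simp [positions, List.prefix_iff_eq_take, eq_comm]

theorem occ_pos_iff {x w : List α} : 0 < occ x w ↔ ∃ i ≤ x.length, w <+: x.drop i := by
  simp only [occ_eq_card_positions, Finset.card_pos, Finset.Nonempty, mem_positions]

theorem isInfix_of_occ_pos {x w : List α} (h : 0 < occ x w) : w <:+: x := by
  obtain ⟨i, -, hi⟩ := occ_pos_iff.1 h
  exact hi.isInfix.trans (x.drop_suffix i).isInfix

theorem occ_le_occ_of_prefix (x : List α) {u v : List α} (h : u <+: v) : occ x v ≤ occ x u :=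
  Finset.card_le_card fun _ hi ↦
    mem_positions.2 ⟨(mem_positions.1 hi).1, h.trans (mem_positions.1 hi).2⟩

theorem occ_cons_le (x : List α) (a : α) (u : List α) : occ x (a :: u) ≤ occ x u :=
  Finset.card_le_card_of_injOn (· + 1)
    (fun _ hi ↦ mem_positions.2 (cons_prefix_drop (mem_positions.1 hi).2))
    (fun _ _ _ _ h ↦ Nat.succ_injective h)

/-- Since `u` occurs only once, the occurrence of `v` starts right after that of `a u`. -/
theorem occ_cons_pos_of_occ_eq_one {x u v : List α} {a : α} (hu : occ x u = 1)
    (hau : 0 < occ x (a :: u)) (huv : u <+: v) (hv : 0 < occ x v) : 0 < occ x (a :: v) := by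
  obtain ⟨k, -, hk⟩ := occ_pos_iff.1 hau
  obtain ⟨j, hj, hjv⟩ := occ_pos_iff.1 hv
  obtain ⟨hk_lt, hk_u⟩ := cons_prefix_drop hk
  have hkj : k + 1 = j := Finset.card_le_one.1 (occ_eq_card_positions x u ▸ hu.le) _
    (mem_positions.2 ⟨hk_lt, hk_u⟩) _ (mem_positions.2 ⟨hj, huv.trans hjv⟩)
  rw [List.drop_eq_getElem_cons hk_lt] at hk
  refine occ_pos_iff.2 ⟨k, hk_lt.le, ?_⟩
  rw [List.drop_eq_getElem_cons hk_lt, hkj]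
  exact List.cons_prefix_cons.2 ⟨(List.cons_prefix_cons.1 hk).1, hjv⟩

end Occ

open Occ

section

variable {α : Type*} [DecidableEq α]

theorem occ_lt_expFreq_of_stdDev_neg {x w : List α} (h : stdDev x w < 0) :
    (occ x w : ℝ) < expFreq x w := by
  have hden : (0 : ℝ) < max (Real.sqrt (expFreq x w)) 1 := lt_max_of_lt_right one_pos
  exact sub_neg.1 ((div_neg_iff.1 h).resolve_left fun h' ↦ hden.not_gt h'.2).1

theorem occ_infix_pos_of_expFreq_pos {x w : List α} (h : 0 < expFreq x w) :
    0 < occ x w.tail.dropLast := by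
  by_contra hc
  simp [expFreq, hc] at h

theorem expFreq_le_occ_of_occ_infix_eq_one {x w : List α} (hw : 2 ≤ w.length)
    (h1 : occ x w.tail.dropLast = 1) : expFreq x w ≤ occ x w := by
  obtain ⟨a, b, t, rfl⟩ : ∃ a b t, w = a :: b :: t := by
    match w, hw with
    | a :: b :: t, _ => exact ⟨a, b, t, rfl⟩
  set u := (b :: t).dropLast
  simp only [List.tail_cons] at h1
  have hp : occ x (a :: u) ≤ 1 := h1 ▸ occ_cons_le x a u
  have hs : occ x (b :: t) ≤ 1 := h1 ▸ occ_le_occ_of_prefix x (List.dropLast_prefix _)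
  have hE : expFreq x (a :: b :: t) = (occ x (a :: u) * occ x (b :: t) : ℕ) := by
    simp [expFreq, u, h1]
  rw [hE, Nat.cast_le]
  by_cases hboth : 0 < occ x (a :: u) ∧ 0 < occ x (b :: t)
  · have := occ_cons_pos_of_occ_eq_one h1 hboth.1 (List.dropLast_prefix _) hboth.2
    nlinarith
  · rw [not_and_or, not_lt, not_lt, Nat.le_zero, Nat.le_zero] at hboth
    rcases hboth with h | h <;> simp [h]

end

/-- Let `ρ < 0` and suppose `x` has at least one factor occurring at least
twice; let `L` be the maximum length of a factor `v` of `x` with `f(v) ≥ 2`.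
Then every `ρ`-avoided word `w` in `x` with `|w| > 2` satisfies `|w| ≤ L + 2`. -/
theorem stmt_9 {α : Type*} [DecidableEq α] (ρ : ℝ) (hρ : ρ < 0)
    (x : List α) (L : ℕ)
    (hL : IsGreatest {l : ℕ | ∃ v : List α, v <:+: x ∧ 2 ≤ occ x v ∧ v.length = l} L)
    (w : List α) (hw : 2 < w.length) (hav : stdDev x w ≤ ρ) :
    w.length ≤ L + 2 := by
  have hlt := occ_lt_expFreq_of_stdDev_neg (hav.trans_lt hρ)
  have hpos := occ_infix_pos_of_expFreq_pos ((Nat.cast_nonneg _).trans_lt hlt)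
  have htwo : 2 ≤ occ x w.tail.dropLast := by
    by_contra! h
    exact (expFreq_le_occ_of_occ_infix_eq_one hw.le (by omega)).not_gt hlt
  have hlen : w.tail.dropLast.length ≤ L :=
    hL.2 ⟨_, isInfix_of_occ_pos hpos, htwo, rfl⟩
  simp only [List.length_dropLast, List.length_tail] at hlen
  omega
end

section
/- Let x have length n ≥ 1 and let ρ be a real number with −1/n ≤ ρ < 0. Then every minimal absent word w of x with |w| > 2 is ρ-avoided in x; indeed std(w) ≤ −1/n ≤ ρ. -/
/-!
Since `w` is absent, `std(w) = -E(w) / max(√E(w), 1)`. Minimality makes `w_p`, `w_s` and the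
nonempty infix `w_i` occur, so `E(w) ≥ 1 / f(w_i) ≥ 1 / n`. If `E(w) ≤ 1` this gives
`std(w) = -E(w) ≤ -1/n`; otherwise `std(w) = -√E(w) ≤ -1 ≤ -1/n`.
-/

section Frequencies

variable {α : Type*} [DecidableEq α]

lemma occ_le_length (x : List α) {w : List α} (hw : w ≠ []) : occ x w ≤ x.length := by
  have hsub : (Finset.range (x.length + 1)).filter (fun i => (x.drop i).take w.length = w) ⊆
      Finset.range x.length := by
    intro i hi
    rw [Finset.mem_filter, Finset.mem_range] at hi
    rw [Finset.mem_range]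
    by_contra hge
    obtain rfl : i = x.length := by omega
    rw [List.drop_length, List.take_nil] at hi
    exact hw hi.2.symm
  simpa [occ] using Finset.card_le_card hsub

lemma IsMAW.occ_pos_of_length_lt {x w v : List α} (h : IsMAW x w) (hv : v <:+: w)
    (hlt : v.length < w.length) : 0 < occ x v :=
  h.2 v hv (by rintro rfl; exact lt_irrefl _ hlt)

lemma one_div_length_le_expFreq {x w : List α} (hp : 0 < occ x w.dropLast)
    (hs : 0 < occ x w.tail) (hi : 0 < occ x w.tail.dropLast) (hne : w.tail.dropLast ≠ []) :
    1 / (x.length : ℝ) ≤ expFreq x w := by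
  have hP : (1 : ℝ) ≤ occ x w.dropLast := by exact_mod_cast hp
  have hS : (1 : ℝ) ≤ occ x w.tail := by exact_mod_cast hs
  have hM : (0 : ℝ) < occ x w.tail.dropLast := by exact_mod_cast hi
  have hMn : (occ x w.tail.dropLast : ℝ) ≤ x.length := by exact_mod_cast occ_le_length x hne
  rw [expFreq, if_pos hi]
  calc 1 / (x.length : ℝ) ≤ 1 / occ x w.tail.dropLast := one_div_le_one_div_of_le hM hMn
    _ ≤ _ := div_le_div_of_nonneg_right (by nlinarith) hM.le

lemma stdDev_of_occ_eq_zero {x w : List α} (h : occ x w = 0) :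
    stdDev x w = -expFreq x w / max (Real.sqrt (expFreq x w)) 1 := by
  rw [stdDev, h, Nat.cast_zero, zero_sub]

end Frequencies

lemma neg_div_max_sqrt_one_le {e c : ℝ} (hc : c ≤ 1) (hce : c ≤ e) :
    -e / max (Real.sqrt e) 1 ≤ -c := by
  rcases le_total (Real.sqrt e) 1 with hle | hlt
  · rw [max_eq_right hle, div_one]
    linarith
  · rw [max_eq_left hlt, neg_div, Real.div_sqrt]
    linarith

theorem stmt_11_general {α : Type*} [DecidableEq α] (x : List α)
    (ρ : ℝ) (hρ₁ : -(1 / (x.length : ℝ)) ≤ ρ)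
    (w : List α) (hw : 2 < w.length) (hmaw : IsMAW x w) :
    stdDev x w ≤ -(1 / (x.length : ℝ)) ∧ stdDev x w ≤ ρ := by
  have hp := hmaw.occ_pos_of_length_lt (List.dropLast_prefix w).isInfix
    (by rw [List.length_dropLast]; omega)
  have hs := hmaw.occ_pos_of_length_lt (List.tail_suffix w).isInfix
    (by rw [List.length_tail]; omega)
  have hi := hmaw.occ_pos_of_length_lt
    ((List.dropLast_prefix w.tail).isInfix.trans (List.tail_suffix w).isInfix)
    (by rw [List.length_dropLast, List.length_tail]; omega)
  have hne : w.tail.dropLast ≠ [] := by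
    rw [← List.length_pos_iff, List.length_dropLast, List.length_tail]; omega
  have key : stdDev x w ≤ -(1 / (x.length : ℝ)) := by
    rw [stdDev_of_occ_eq_zero hmaw.1]
    exact neg_div_max_sqrt_one_le (one_div (x.length : ℝ) ▸ Nat.cast_inv_le_one x.length)
      (one_div_length_le_expFreq hp hs hi hne)
  exact ⟨key, key.trans hρ₁⟩

/-- Let `x` have length `n ≥ 1` and let `ρ` satisfy `−1/n ≤ ρ < 0`. Then every
minimal absent word `w` of `x` with `|w| > 2` is `ρ`-avoided in `x`; indeed
`std(w) ≤ −1/n ≤ ρ`. -/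
theorem stmt_11 {α : Type*} [DecidableEq α] (x : List α) (hn : 1 ≤ x.length)
    (ρ : ℝ) (hρ₁ : -(1 / (x.length : ℝ)) ≤ ρ) (hρ₂ : ρ < 0)
    (w : List α) (hw : 2 < w.length) (hmaw : IsMAW x w) :
    stdDev x w ≤ -(1 / (x.length : ℝ)) ∧ stdDev x w ≤ ρ :=
  stmt_11_general x ρ hρ₁ w hw hmaw
end

section
/- For all integers σ and n with 3 ≤ σ ≤ n, there exists a word x of length n over an alphabet of size σ that has at least (σ−1)·(σ−2)·⌊n/(σ−1)⌋ − (σ−2) minimal absent words. -/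
/-!
Write `n = r + (σ - 1)(m + 1)` with `r < σ - 1` and take
`x = 0^r (0^m 1) (0^m 2) ⋯ (0^m (σ-1))`. A nonzero letter `i` of `x` sits exactly at the
positions `p` with `p + 1 = r + i (m + 1)`, so an occurrence of `i 0^s j` with `i, j ≠ 0` and
`s ≤ m` forces `s + 1 = (j - i)(m + 1)`, that is `s = m` and `j = i + 1`. Every other such word
with `i ≤ σ - 2` is absent while `i 0^s` and `0^s j` occur, so it is a minimal absent word; this
gives `(σ - 2)(m + 1)(σ - 1) - (σ - 2)` of them.
-/

open Fin.NatCast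

namespace List

variable {α : Type*}

theorem infix_iff_exists_take_drop {x w : List α} :
    w <:+: x ↔ ∃ i ≤ x.length, (x.drop i).take w.length = w := by
  constructor
  · rintro ⟨s, t, rfl⟩
    refine ⟨s.length, by simp, ?_⟩
    rw [append_assoc, drop_left, take_left]
  · rintro ⟨i, -, h⟩
    obtain ⟨t, ht⟩ := take_prefix w.length (x.drop i)
    refine ⟨x.take i, t, ?_⟩
    rw [← h, append_assoc, ht, take_append_drop]

theorem IsInfix.infix_dropLast_or_infix_tail {v w : List α} (h : v <:+: w) (hne : v ≠ w) :
    v <:+: w.dropLast ∨ v <:+: w.tail := by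
  obtain ⟨s, t, rfl⟩ := h
  rcases eq_or_ne t [] with rfl | ht
  · have hs : s ≠ [] := by rintro rfl; simp at hne
    right
    rw [append_nil, tail_append_of_ne_nil hs]
    exact (suffix_append s.tail v).isInfix
  · left
    rw [dropLast_append_of_ne_nil ht]
    exact ⟨s, t.dropLast, by rw [append_assoc]⟩

theorem infix_map_range_iff (f : ℕ → α) (n : ℕ) (w : List α) :
    w <:+: (range n).map f ↔
      ∃ p, p + w.length ≤ n ∧ ∀ k (hk : k < w.length), f (p + k) = w[k] := by
  rw [infix_iff_getElem?]
  simp only [length_map, length_range, getElem?_map]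
  constructor
  · rintro ⟨p, hp, h⟩
    refine ⟨p, by omega, fun k hk => ?_⟩
    have := h k hk
    rw [getElem?_eq_getElem (by simp; omega)] at this
    simpa [Nat.add_comm] using this
  · rintro ⟨p, hp, h⟩
    refine ⟨p, by omega, fun k hk => ?_⟩
    rw [getElem?_eq_getElem (by simp; omega)]
    simpa [Nat.add_comm] using h k hk

end List

section MinimalAbsentWords

variable {α : Type*} [DecidableEq α] {x w : List α}

theorem occ_pos_iff_s13 : 0 < occ x w ↔ w <:+: x := by
  simp only [occ, Finset.card_pos, Finset.filter_nonempty_iff, Finset.mem_range,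
    Nat.lt_succ_iff, List.infix_iff_exists_take_drop]

theorem occ_eq_zero_iff : occ x w = 0 ↔ ¬ w <:+: x := by
  rw [← occ_pos_iff_s13, Nat.pos_iff_ne_zero, not_not]

theorem isMAW_of_infix_dropLast_of_infix_tail (habs : ¬ w <:+: x)
    (hinit : w.dropLast <:+: x) (htail : w.tail <:+: x) : IsMAW x w := by
  refine ⟨occ_eq_zero_iff.mpr habs, fun v hv hne => occ_pos_iff_s13.mpr ?_⟩
  rcases hv.infix_dropLast_or_infix_tail hne with h | h
  exacts [h.trans hinit, h.trans htail]

theorem IsMAW.length_le (h : IsMAW x w) : w.length ≤ x.length + 1 := by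
  have hw : w ≠ [] := by
    rintro rfl
    exact occ_eq_zero_iff.mp h.1 List.nil_infix
  have hinit : w.dropLast ≠ w := fun he => by
    have := congrArg List.length he
    rw [List.length_dropLast] at this
    have := List.length_pos_iff.mpr hw
    omega
  have := (occ_pos_iff_s13.mp (h.2 _ (List.dropLast_prefix w).isInfix hinit)).length_le
  rw [List.length_dropLast] at this
  omega

theorem finite_setOf_isMAW [Finite α] (x : List α) : {w | IsMAW x w}.Finite :=
  (List.finite_length_le α (x.length + 1)).subset fun _ hw => IsMAW.length_le hw

end MinimalAbsentWords

/-- Position `p` of `0^r (0^m 1) (0^m 2) (0^m 3) ⋯` carries the letter `i ≥ 1` exactly when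
`p + 1 = r + i (m + 1)`. -/
def blockLetter (r m p : ℕ) : ℕ :=
  if r ≤ p ∧ m + 1 ∣ p + 1 - r then (p + 1 - r) / (m + 1) else 0

section BlockLetter

variable {r m : ℕ}

theorem blockLetter_add_mul_sub_one {i : ℕ} (hi : 1 ≤ i) :
    blockLetter r m (r + i * (m + 1) - 1) = i := by
  have hpos : 1 ≤ i * (m + 1) := Nat.one_le_iff_ne_zero.mpr (by positivity)
  have h : r + i * (m + 1) - 1 + 1 - r = i * (m + 1) := by omega
  rw [blockLetter, if_pos ⟨by omega, by rw [h]; exact Dvd.intro_left i rfl⟩, h,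
    Nat.mul_div_cancel _ m.succ_pos]

theorem blockLetter_add_mul_add {a k : ℕ} (hk : k < m) :
    blockLetter r m (r + a * (m + 1) + k) = 0 := by
  rw [blockLetter, if_neg]
  rintro ⟨-, hdvd⟩
  rw [show r + a * (m + 1) + k + 1 - r = a * (m + 1) + (k + 1) by omega] at hdvd
  have := Nat.le_of_dvd k.succ_pos ((Nat.dvd_add_right (Dvd.intro_left a rfl)).mp hdvd)
  omega

theorem blockLetter_le {c p : ℕ} (hp : p < r + c * (m + 1)) : blockLetter r m p ≤ c := by
  unfold blockLetter
  split_ifs with h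
  · obtain ⟨-, d, hd⟩ := h
    rw [hd, Nat.mul_div_cancel_left _ m.succ_pos]
    have : (m + 1) * d ≤ (m + 1) * c := by rw [← hd, Nat.mul_comm (m + 1)]; omega
    exact Nat.le_of_mul_le_mul_left this m.succ_pos
  · exact Nat.zero_le c

theorem add_one_eq_of_blockLetter_eq {p i : ℕ} (hi : 1 ≤ i) (h : blockLetter r m p = i) :
    p + 1 = r + i * (m + 1) := by
  unfold blockLetter at h
  split_ifs at h with hc
  · obtain ⟨hrp, c, hc⟩ := hc
    rw [hc, Nat.mul_div_cancel_left _ m.succ_pos] at h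
    rw [← h, Nat.mul_comm]
    omega
  · omega

end BlockLetter

theorem eq_of_mul_add_eq_mul {i j m s : ℕ} (h : i * (m + 1) + (s + 1) = j * (m + 1))
    (hs : s ≤ m) : s = m ∧ j = i + 1 := by
  rcases lt_trichotomy j (i + 1) with hj | rfl | hj
  · have : j ≤ i := by omega
    nlinarith
  · constructor <;> nlinarith
  · nlinarith

def staircase (σ r m : ℕ) [NeZero σ] : List (Fin σ) :=
  (List.range (r + (σ - 1) * (m + 1))).map fun p => (blockLetter r m p : Fin σ)

def zeroRunWord (σ : ℕ) [NeZero σ] (i s j : ℕ) : List (Fin σ) :=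
  (i : Fin σ) :: (List.replicate s 0 ++ [(j : Fin σ)])

section Staircase

variable {σ r m : ℕ} [NeZero σ]

theorem length_staircase : (staircase σ r m).length = r + (σ - 1) * (m + 1) := by
  simp [staircase]

theorem add_one_eq_of_natCast_blockLetter_eq {p t : ℕ} (hp : p < r + (σ - 1) * (m + 1))
    (ht : 1 ≤ t) (htσ : t < σ) (h : (blockLetter r m p : Fin σ) = t) :
    p + 1 = r + t * (m + 1) := by
  have hlt : blockLetter r m p < σ := by have := blockLetter_le hp; omega
  exact add_one_eq_of_blockLetter_eq ht (CharP.natCast_injOn_Iio (Fin σ) σ hlt htσ h)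

theorem cons_replicate_infix_staircase {i s : ℕ} (hi : 1 ≤ i) (hiσ : i ≤ σ - 2) (hs : s ≤ m) :
    (i : Fin σ) :: List.replicate s 0 <:+: staircase σ r m := by
  rw [staircase, List.infix_map_range_iff]
  have hpos : 1 ≤ i * (m + 1) := Nat.one_le_iff_ne_zero.mpr (by positivity)
  have hle : (i + 1) * (m + 1) ≤ (σ - 1) * (m + 1) := Nat.mul_le_mul_right _ (by omega)
  have : (i + 1) * (m + 1) = i * (m + 1) + (m + 1) := by ring
  refine ⟨r + i * (m + 1) - 1, by simp only [List.length_cons, List.length_replicate]; omega, ?_⟩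
  rintro (_ | k) hk
  · simp [blockLetter_add_mul_sub_one hi]
  · simp only [List.length_cons, List.length_replicate] at hk
    rw [show r + i * (m + 1) - 1 + (k + 1) = r + i * (m + 1) + k by omega,
      blockLetter_add_mul_add (by omega)]
    simp

theorem replicate_append_infix_staircase {s j : ℕ} (hj : 1 ≤ j) (hjσ : j ≤ σ - 1) (hs : s ≤ m) :
    List.replicate s 0 ++ [(j : Fin σ)] <:+: staircase σ r m := by
  rw [staircase, List.infix_map_range_iff]
  have hpos : 1 ≤ j * (m + 1) := Nat.one_le_iff_ne_zero.mpr (by positivity)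
  have hle : j * (m + 1) ≤ (σ - 1) * (m + 1) := Nat.mul_le_mul_right _ hjσ
  have hsucc : (j - 1) * (m + 1) + (m + 1) = j * (m + 1) := by
    rw [← Nat.succ_mul, Nat.succ_eq_add_one, Nat.sub_add_cancel hj]
  refine ⟨r + j * (m + 1) - 1 - s, by simp; omega, fun k hk => ?_⟩
  simp only [List.length_append, List.length_replicate, List.length_singleton] at hk
  rcases Nat.lt_or_ge k s with hks | hks
  · rw [show r + j * (m + 1) - 1 - s + k = r + (j - 1) * (m + 1) + (m - s + k) by omega,
      blockLetter_add_mul_add (by omega), List.getElem_append_left (by simpa using hks)]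
    simp
  · obtain rfl : k = s := by omega
    rw [show r + j * (m + 1) - 1 - k + k = r + j * (m + 1) - 1 by omega,
      blockLetter_add_mul_sub_one hj]
    simp

theorem eq_of_zeroRunWord_infix_staircase {i s j : ℕ} (hi : 1 ≤ i) (hiσ : i < σ) (hj : 1 ≤ j)
    (hjσ : j < σ) (hs : s ≤ m) (h : zeroRunWord σ i s j <:+: staircase σ r m) :
    s = m ∧ j = i + 1 := by
  rw [staircase, List.infix_map_range_iff] at h
  obtain ⟨p, hp, hw⟩ := h
  simp only [zeroRunWord, List.length_cons, List.length_append, List.length_replicate,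
    List.length_nil] at hp hw
  have hfirst := add_one_eq_of_natCast_blockLetter_eq (p := p) (r := r) (m := m) (by omega) hi hiσ
    (by simpa using hw 0 (by omega))
  have hlast := add_one_eq_of_natCast_blockLetter_eq (p := p + (s + 1)) (r := r) (m := m) (by omega) hj hjσ
    (by simpa using hw (s + 1) (by omega))
  exact eq_of_mul_add_eq_mul (by omega) hs

theorem isMAW_zeroRunWord {i s j : ℕ} (hi : 1 ≤ i) (hiσ : i ≤ σ - 2) (hs : s ≤ m) (hj : 1 ≤ j)
    (hjσ : j ≤ σ - 1) (hne : s = m → j ≠ i + 1) :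
    IsMAW (staircase σ r m) (zeroRunWord σ i s j) := by
  refine isMAW_of_infix_dropLast_of_infix_tail (fun h => ?_) ?_ ?_
  · obtain ⟨hsm, hji⟩ := eq_of_zeroRunWord_infix_staircase hi (by omega) hj (by omega) hs h
    exact hne hsm hji
  · rw [zeroRunWord, ← List.cons_append, List.dropLast_concat]
    exact cons_replicate_infix_staircase hi hiσ hs
  · exact replicate_append_infix_staircase hj hjσ hs

end Staircase

theorem zeroRunWord_injective {σ : ℕ} [NeZero σ] {i s j i' s' j' : ℕ} (hi : i < σ) (hj : j < σ)
    (hi' : i' < σ) (hj' : j' < σ) (h : zeroRunWord σ i s j = zeroRunWord σ i' s' j') :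
    i = i' ∧ s = s' ∧ j = j' := by
  simp only [zeroRunWord, List.cons.injEq] at h
  obtain ⟨hhead, htail⟩ := h
  have hs : s = s' := by simpa using congrArg List.length htail
  subst hs
  have hlast : (j : Fin σ) = j' := by simpa using htail
  exact ⟨CharP.natCast_injOn_Iio (Fin σ) σ hi hi' hhead, rfl,
    CharP.natCast_injOn_Iio (Fin σ) σ hj hj' hlast⟩

open Finset in
def mawIndices (σ m : ℕ) : Finset (ℕ × ℕ × ℕ) :=
  (Icc 1 (σ - 2) ×ˢ range (m + 1) ×ˢ Icc 1 (σ - 1)) \ (Icc 1 (σ - 2)).image fun i => (i, m, i + 1)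

theorem mem_mawIndices {σ m i s j : ℕ} :
    (i, s, j) ∈ mawIndices σ m ↔
      (1 ≤ i ∧ i ≤ σ - 2) ∧ s ≤ m ∧ (1 ≤ j ∧ j ≤ σ - 1) ∧ (s = m → j ≠ i + 1) := by
  simp only [mawIndices, Finset.mem_sdiff, Finset.mem_product, Finset.mem_Icc, Finset.mem_range,
    Finset.mem_image, Prod.mk.injEq, ne_eq, not_exists, not_and]
  constructor
  · rintro ⟨⟨hi, hs, hj⟩, hne⟩
    exact ⟨hi, by omega, hj, fun hsm hji => hne i hi rfl hsm.symm hji.symm⟩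
  · rintro ⟨hi, hs, hj, hne⟩
    exact ⟨⟨hi, by omega, hj⟩, fun x _ hx hms hxj => hne hms.symm (hx ▸ hxj.symm)⟩

theorem card_mawIndices (σ m : ℕ) :
    (mawIndices σ m).card = (σ - 2) * (m + 1) * (σ - 1) - (σ - 2) := by
  rw [mawIndices, Finset.card_sdiff_of_subset, Finset.card_product, Finset.card_product,
    Finset.card_image_of_injective _ fun _ _ h => (Prod.mk.inj h).1]
  · simp only [Nat.card_Icc, Finset.card_range, Nat.add_sub_cancel, Nat.mul_assoc]
  · intro t ht
    simp only [Finset.mem_image, Finset.mem_Icc] at ht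
    obtain ⟨i, hi, rfl⟩ := ht
    simp only [Finset.mem_product, Finset.mem_Icc, Finset.mem_range]
    omega

theorem injOn_zeroRunWord_mawIndices {σ m : ℕ} [NeZero σ] :
    Set.InjOn (fun t : ℕ × ℕ × ℕ => zeroRunWord σ t.1 t.2.1 t.2.2) (mawIndices σ m) := by
  rintro ⟨i, s, j⟩ ht ⟨i', s', j'⟩ ht' h
  rw [Finset.mem_coe, mem_mawIndices] at ht ht'
  dsimp only at h
  obtain ⟨rfl, rfl, rfl⟩ := zeroRunWord_injective (by omega) (by omega) (by omega) (by omega) h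
  rfl

/-- For all integers `σ` and `n` with `3 ≤ σ ≤ n`, there exists a word `x` of
length `n` over an alphabet of size `σ` that has at least
`(σ−1)·(σ−2)·⌊n/(σ−1)⌋ − (σ−2)` minimal absent words. -/
theorem stmt_13 (σ n : ℕ) (hσ : 3 ≤ σ) (hσn : σ ≤ n) :
    ∃ x : List (Fin σ), x.length = n ∧
      (σ - 1) * (σ - 2) * (n / (σ - 1)) - (σ - 2) ≤
        {w : List (Fin σ) | IsMAW x w}.ncard := by
  have : NeZero σ := ⟨by omega⟩
  obtain ⟨m, hq⟩ : ∃ m, n / (σ - 1) = m + 1 :=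
    Nat.exists_eq_add_one.mpr (Nat.div_pos (by omega) (by omega))
  have hn : n = n % (σ - 1) + (σ - 1) * (m + 1) := by rw [← hq, Nat.mod_add_div]
  refine ⟨staircase σ (n % (σ - 1)) m, by rw [length_staircase, ← hn], ?_⟩
  have hsub : ((mawIndices σ m).image fun t => zeroRunWord σ t.1 t.2.1 t.2.2 : Set _) ⊆
      {w | IsMAW (staircase σ (n % (σ - 1)) m) w} := by
    intro w hw
    obtain ⟨⟨i, s, j⟩, ht, rfl⟩ := Finset.mem_image.mp hw
    obtain ⟨⟨hi, hiσ⟩, hs, ⟨hj, hjσ⟩, hne⟩ := mem_mawIndices.mp ht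
    exact isMAW_zeroRunWord hi hiσ hs hj hjσ hne
  calc (σ - 1) * (σ - 2) * (n / (σ - 1)) - (σ - 2)
      = (mawIndices σ m).card := by rw [card_mawIndices, hq]; ring_nf
    _ = ((mawIndices σ m).image fun t => zeroRunWord σ t.1 t.2.1 t.2.2).card :=
      (Finset.card_image_of_injOn injOn_zeroRunWord_mawIndices).symm
    _ ≤ _ := by
      rw [← Set.ncard_coe_finset]
      exact Set.ncard_le_ncard hsub (finite_setOf_isMAW _)
end

section
/- The number of distinct factors w of x with |w| ≥ 2 such that f(w) < f(w_p) is at most 2n. -/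
namespace StmtAux

open Finset

variable {α : Type*} [DecidableEq α]

/-- Finset of all factors (infixes) of `x`. -/
def facts (x : List α) : Finset (List α) := (x.tails.flatMap List.inits).toFinset

lemma mem_facts {x w : List α} : w ∈ facts x ↔ w <:+: x := by
  simp only [facts, List.mem_toFinset, List.mem_flatMap, List.mem_tails, List.mem_inits,
    List.infix_iff_prefix_suffix]
  tauto

/-- Right extension letters of `v` in `x`. -/
def ext (x v : List α) : Finset α := x.toFinset.filter (fun a => (v ++ [a]) <:+: x)

/-- Extension degree of `v` in `x`. -/
def e (x v : List α) : ℕ := (ext x v).card + (if v <:+ x then 1 else 0)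

lemma mem_ext {x v : List α} {a : α} (h : (v ++ [a]) <:+: x) : a ∈ ext x v := by
  refine Finset.mem_filter.2 ⟨List.mem_toFinset.2 (h.sublist.mem ?_), h⟩
  simp

lemma one_le_e {x v : List α} (h : v ∈ facts x) : 1 ≤ e x v := by
  rcases mem_facts.1 h with ⟨s, t, hst⟩
  rcases t with _ | ⟨b, t⟩
  · have : v <:+ x := ⟨s, by simpa using hst⟩
    simp [e, this]
  · have hb : (v ++ [b]) <:+: x := ⟨s, t, by simpa using hst⟩
    have := Finset.card_pos.2 ⟨b, mem_ext hb⟩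
    simp [e]; omega

lemma occ_pos_of_infix {x w : List α} (h : w <:+: x) : 0 < occ x w := by
  rcases h with ⟨s, t, hst⟩
  refine Finset.card_pos.2 ⟨s.length, Finset.mem_filter.2 ⟨Finset.mem_range.2 ?_, ?_⟩⟩
  · have : s.length ≤ x.length := by rw [← hst]; simp
    omega
  · have hd : x.drop s.length = w ++ t := by
      rw [← hst, List.append_assoc, List.drop_left]
    rw [hd, List.take_left]

/-- key witness lemma -/
lemma two_le_e {x v : List α} {a : α} (hw : (v ++ [a]) <:+: x)
    (hlt : occ x (v ++ [a]) < occ x v) : 2 ≤ e x v := by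
  classical
  set A := (Finset.range (x.length + 1)).filter
      (fun i => (x.drop i).take (v ++ [a]).length = v ++ [a]) with hA
  set B := (Finset.range (x.length + 1)).filter
      (fun i => (x.drop i).take v.length = v) with hB
  have hsub : A ⊆ B := by
    intro i hi
    rw [hA, Finset.mem_filter] at hi
    refine Finset.mem_filter.2 ⟨hi.1, ?_⟩
    have := hi.2
    have h2 : ((x.drop i).take (v ++ [a]).length).take v.length = v := by
      rw [this, List.take_left]
    rwa [List.take_take, min_eq_left (by simp)] at h2
  have : (B \ A).Nonempty := by
    rw [← Finset.card_pos, Finset.card_sdiff_of_subset hsub]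
    have : A.card < B.card := hlt
    omega
  rcases this with ⟨i, hi⟩
  rw [Finset.mem_sdiff, hB, hA, Finset.mem_filter] at hi
  obtain ⟨⟨hir, hocc⟩, hnot⟩ := hi
  set y := x.drop i with hy
  have hlen : v.length ≤ y.length := by
    have := congrArg List.length hocc
    simp only [List.length_take] at this
    omega
  have ha : a ∈ ext x v := mem_ext hw
  rcases eq_or_lt_of_le hlen with heq | hlt'
  · -- y = v, so v is a suffix of x
    have : y = v := by
      have := List.take_of_length_le (le_of_eq heq.symm) (l := y)
      rw [hocc] at this; exact this.symm
    have hsuf : v <:+ x := this ▸ List.drop_suffix i x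
    have hc := Finset.card_pos.2 ⟨a, ha⟩
    have hone : (if v <:+ x then 1 else 0) = 1 := if_pos hsuf
    simp only [e, hone]
    omega
  · -- y has a letter b after v, b ≠ a
    have hb : y.take (v.length + 1) = v ++ [y[v.length]'hlt'] := by
      rw [List.take_succ, hocc, List.getElem?_eq_getElem hlt']
      rfl
    set b := y[v.length]'hlt' with hbdef
    have hba : b ≠ a := by
      intro h
      apply hnot
      rw [Finset.mem_filter]
      refine ⟨hir, ?_⟩
      show y.take (v ++ [a]).length = v ++ [a]
      rw [List.length_append, List.length_singleton, hb, h]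
    have hvb : (v ++ [b]) <:+: x := by
      refine List.infix_iff_prefix_suffix.2 ⟨y, ?_, List.drop_suffix i x⟩
      exact hb ▸ List.take_prefix (v.length + 1) y
    have hbext : b ∈ ext x v := mem_ext hvb
    have h2 : 1 < (ext x v).card := Finset.one_lt_card.2 ⟨a, ha, b, hbext, (Ne.symm hba)⟩
    simp only [e]
    omega

lemma biUnion_ext_card (x : List α) (F : Finset (List α)) :
    (F.biUnion (fun v => (ext x v).image (fun a => v ++ [a]))).card
      = ∑ v ∈ F, (ext x v).card := by
  rw [Finset.card_biUnion]
  · exact Finset.sum_congr rfl fun v _ =>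
      Finset.card_image_of_injective _ (fun a b h => by simpa using h)
  · intro v hv w hw hvw
    simp only [Finset.disjoint_left, Finset.mem_image]
    rintro z ⟨a, -, rfl⟩ ⟨b, -, hz⟩
    apply hvw
    have := congrArg List.dropLast hz
    simpa [List.dropLast_concat] using this.symm

lemma biUnion_facts_eq (x : List α) :
    (facts x).biUnion (fun v => (ext x v).image (fun a => v ++ [a]))
      = (facts x).filter (fun w => w ≠ []) := by
  ext w
  simp only [Finset.mem_biUnion, Finset.mem_image, Finset.mem_filter]
  constructor
  · rintro ⟨v, hv, a, ha, rfl⟩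
    exact ⟨mem_facts.2 (Finset.mem_filter.1 ha).2, by simp⟩
  · rintro ⟨hw, hne⟩
    refine ⟨w.dropLast, mem_facts.2 ((w.dropLast_prefix).isInfix.trans (mem_facts.1 hw)),
      w.getLast hne, ?_, List.dropLast_append_getLast hne⟩
    exact mem_ext ((List.dropLast_append_getLast hne).symm ▸ mem_facts.1 hw)

lemma suffix_filter_card (x : List α) :
    ((facts x).filter (fun v => v <:+ x)).card = x.length + 1 := by
  have heq : (facts x).filter (fun v => v <:+ x)
      = (Finset.range (x.length + 1)).image (fun i => x.drop i) := by
    ext w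
    simp only [Finset.mem_filter, Finset.mem_image, Finset.mem_range]
    constructor
    · rintro ⟨-, t, ht⟩
      refine ⟨t.length, ?_, ?_⟩
      · have : t.length ≤ x.length := by rw [← ht]; simp
        omega
      · rw [← ht, List.drop_left]
    · rintro ⟨i, hi, rfl⟩
      exact ⟨mem_facts.2 (List.drop_suffix i x).isInfix, List.drop_suffix i x⟩
  rw [heq, Finset.card_image_of_injOn, Finset.card_range]
  intro i hi j hj h
  have hi' := Finset.mem_range.1 hi
  have hj' := Finset.mem_range.1 hj
  have := congrArg List.length h
  simp only [List.length_drop] at this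
  omega

lemma nil_mem_facts (x : List α) : [] ∈ facts x := mem_facts.2 List.nil_infix

lemma sum_e (x : List α) : ∑ v ∈ facts x, e x v = (facts x).card + x.length := by
  have h1 : ∑ v ∈ facts x, e x v
      = ∑ v ∈ facts x, (ext x v).card + ∑ v ∈ facts x, (if v <:+ x then 1 else 0) :=
    Finset.sum_add_distrib
  have h2 : ∑ v ∈ facts x, (if v <:+ x then 1 else 0)
      = ((facts x).filter (fun v => v <:+ x)).card := (Finset.card_filter _ _).symm
  have h3 : ∑ v ∈ facts x, (ext x v).card = ((facts x).filter (fun w => w ≠ [])).card := by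
    rw [← biUnion_ext_card, biUnion_facts_eq]
  have h4 : ((facts x).filter (fun w => w ≠ [])).card = (facts x).card - 1 := by
    rw [Finset.filter_ne', Finset.card_erase_of_mem (nil_mem_facts x)]
  have h5 : 1 ≤ (facts x).card := Finset.card_pos.2 ⟨[], nil_mem_facts x⟩
  rw [h1, h2, h3, h4, suffix_filter_card]
  omega

lemma main_count (x : List α) :
    ∑ v ∈ (facts x).filter (fun v => 2 ≤ e x v), (ext x v).card ≤ 2 * x.length := by
  have h1 : ∀ v ∈ facts x, 1 ≤ e x v := fun v hv => one_le_e hv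
  have hsub : ∑ v ∈ facts x, (e x v - 1) = x.length := by
    have key : ∑ v ∈ facts x, (e x v - 1) + (facts x).card = ∑ v ∈ facts x, e x v := by
      rw [Finset.card_eq_sum_ones, ← Finset.sum_add_distrib]
      exact Finset.sum_congr rfl fun v hv => Nat.sub_add_cancel (h1 v hv)
    have := sum_e x
    omega
  have hF2sub : ∑ v ∈ (facts x).filter (fun v => 2 ≤ e x v), (e x v - 1) ≤ x.length :=
    hsub ▸ Finset.sum_le_sum_of_subset (Finset.filter_subset _ _)
  have hcard : ((facts x).filter (fun v => 2 ≤ e x v)).card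
      ≤ ∑ v ∈ (facts x).filter (fun v => 2 ≤ e x v), (e x v - 1) := by
    rw [Finset.card_eq_sum_ones]
    refine Finset.sum_le_sum fun v hv => ?_
    have := (Finset.mem_filter.1 hv).2
    omega
  have step : ∑ v ∈ (facts x).filter (fun v => 2 ≤ e x v), (ext x v).card
      ≤ ∑ v ∈ (facts x).filter (fun v => 2 ≤ e x v), (e x v - 1)
        + ((facts x).filter (fun v => 2 ≤ e x v)).card := by
    have heq : ∑ v ∈ (facts x).filter (fun v => 2 ≤ e x v), (e x v - 1)
        + ((facts x).filter (fun v => 2 ≤ e x v)).card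
        = ∑ v ∈ (facts x).filter (fun v => 2 ≤ e x v), e x v := by
      rw [Finset.card_eq_sum_ones, ← Finset.sum_add_distrib]
      exact Finset.sum_congr rfl fun v hv =>
        Nat.sub_add_cancel (h1 v (Finset.filter_subset _ _ hv))
    rw [heq]
    exact Finset.sum_le_sum fun v _ => Nat.le_add_right _ _
  calc ∑ v ∈ (facts x).filter (fun v => 2 ≤ e x v), (ext x v).card
      ≤ _ := step
    _ ≤ x.length + x.length := add_le_add hF2sub (hcard.trans hF2sub)
    _ = 2 * x.length := by ring

end StmtAux


/-- The number of distinct factors `w` of `x` with `|w| ≥ 2` such that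
`f(w) < f(w_p)` is at most `2n`. -/
theorem stmt_15 {α : Type*} [DecidableEq α] (x : List α) :
    {w : List α | w <:+: x ∧ 2 ≤ w.length ∧ occ x w < occ x w.dropLast}.Finite ∧
    {w : List α | w <:+: x ∧ 2 ≤ w.length ∧ occ x w < occ x w.dropLast}.ncard ≤
      2 * x.length := by
    classical
  open StmtAux in
  set Sfin := (facts x).filter (fun w => 2 ≤ w.length ∧ occ x w < occ x w.dropLast) with hS
  have hSeq : {w : List α | w <:+: x ∧ 2 ≤ w.length ∧ occ x w < occ x w.dropLast} = ↑Sfin := by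
    ext w
    simp [hS, mem_facts, and_assoc]
  have hsubset : Sfin ⊆ ((facts x).filter (fun v => 2 ≤ e x v)).biUnion
      (fun v => (ext x v).image (fun a => v ++ [a])) := by
    intro w hw
    obtain ⟨hwf, hlen, hlt⟩ := Finset.mem_filter.1 hw
    have hwx : w <:+: x := mem_facts.1 hwf
    have hne : w ≠ [] := by intro h; rw [h] at hlen; simp at hlen
    set v := w.dropLast with hv
    set a := w.getLast hne with ha
    have hwa : v ++ [a] = w := List.dropLast_append_getLast hne
    have hinf : (v ++ [a]) <:+: x := hwa.symm ▸ hwx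
    have h2e : 2 ≤ e x v := two_le_e hinf (by rw [hwa]; exact hlt)
    refine Finset.mem_biUnion.2 ⟨v, Finset.mem_filter.2
      ⟨mem_facts.2 ((w.dropLast_prefix).isInfix.trans hwx), h2e⟩,
      Finset.mem_image.2 ⟨a, mem_ext hinf, hwa⟩⟩
  have hcard : Sfin.card ≤ 2 * x.length := by
    calc Sfin.card ≤ _ := Finset.card_le_card hsubset
      _ = ∑ v ∈ (facts x).filter (fun v => 2 ≤ e x v), (ext x v).card := biUnion_ext_card x _
      _ ≤ 2 * x.length := main_count x
  rw [hSeq]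
  exact ⟨Sfin.finite_toSet, by rwa [Set.ncard_coe_finset]⟩
end
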